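/- In the bracket cancellation procedure, applying f_i to a multisegment M changes exactly one ')' in the uncanceled string uc_i(M) into a '(' occupying the position immediately to its right (or, when no ')' exists, adds a '(' at the far left); consequently, the number of uncanceled '(' in S_i(f_i(M)) equals the number of uncanceled '(' in S_i(M) plus 1, and the number of uncanceled ')' in S_i(f_i(M)) equals the number of uncanceled ')' in S_i(M) minus 1 when the latter is positive, and 0 otherwise. -/

import Mathlib

/-- A segment `[a,b]` is a pair of integers. -/
abbrev Seg : Type := ℕ × ℕ

/-- A multisegment is a finite multiset of segments. -/
abbrev MS : Type := Multiset Seg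

/-- `M ∈ MS_n`: all segments `[a,b]` satisfy `1 ≤ a ≤ b ≤ n`. -/
def IsMS (n : ℕ) (M : MS) : Prop := ∀ s ∈ M, 1 ≤ s.1 ∧ s.1 ≤ s.2 ∧ s.2 ≤ n

/-- A bracket: `op` = "(", `cl` = ")". -/
inductive Br | op | cl
deriving DecidableEq

/-- One step of the left-to-right bracket cancellation procedure.  The state
`(cls, ops)` records the tags of the currently uncanceled ")" (in order) and the
currently uncanceled "(" (in order).  A new "(" is appended to `ops`; a new ")"
cancels the last uncanceled "(" if there is one, and otherwise is appended to `cls`. -/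
def step {τ : Type} : (List τ × List τ) → (Br × τ) → (List τ × List τ)
  | (cls, ops), (Br.op, s) => (cls, ops ++ [s])
  | (cls, ops), (Br.cl, s) => if ops.isEmpty then (cls ++ [s], ops) else (cls, ops.dropLast)

/-- Process a tagged bracket string; the result `(cls, ops)` lists the tags of the
uncanceled ")" and the uncanceled "(" (left to right).  The reduced (uncanceled)
string is `")"^cls.length ++ "("^ops.length`. -/
def scan {τ : Type} (l : List (Br × τ)) : List τ × List τ := l.foldl step ([], [])

/-- Number of uncanceled ")" in a tagged bracket string. -/
def urStr {τ : Type} (l : List (Br × τ)) : ℕ := (scan l).1.length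

/-- Number of uncanceled "(" in a tagged bracket string. -/
def epsStr {τ : Type} (l : List (Br × τ)) : ℕ := (scan l).2.length

/-- Tag of the rightmost uncanceled ")", if any. -/
def lastCl {τ : Type} (l : List (Br × τ)) : Option τ := (scan l).1.getLast?

/-- Tag of the leftmost uncanceled "(", if any. -/
def headOp {τ : Type} (l : List (Br × τ)) : Option τ := (scan l).2.head?

/-- The string `S_i(M)`: segments are ordered by increasing height, then by
decreasing lower endpoint; each `[h,i]` contributes "(" and each `[h,i-1]`
contributes ")".  In the block of segments of height `t` the "(" over the
`[i-t+1, i]` segments come immediately before the ")" over the `[i-t, i-1]`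
segments, and blocks appear for `t = 1, 2, …`. -/
def Si (M : MS) (i : ℕ) : List (Br × Seg) :=
  (List.range i).flatMap fun t0 =>
    let t := t0 + 1
    List.replicate (M.count (i - t + 1, i)) (Br.op, ((i - t + 1 : ℕ), i)) ++
    List.replicate (M.count (i - t, i - 1)) (Br.cl, ((i - t : ℕ), i - 1))

/-- The string `S_i^*(M)`: segments ordered by increasing height, then by
increasing lower endpoint; each `[i,j]` contributes "(" and each `[i+1,j]`
contributes ")".  In the block of height `t` the "(" below the `[i, i+t-1]`
segments come immediately before the ")" below the `[i+1, i+t]` segments. -/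
def SiStar (n : ℕ) (M : MS) (i : ℕ) : List (Br × Seg) :=
  (List.range n).flatMap fun t0 =>
    let t := t0 + 1
    List.replicate (M.count (i, i + t - 1)) (Br.op, (i, i + t - 1)) ++
    List.replicate (M.count (i + 1, i + t)) (Br.cl, (i + 1, i + t))

/-- The crystal operator `f_i` on multisegments: it changes the segment `[h,i-1]`
under the rightmost uncanceled ")" of `S_i(M)` into `[h,i]`, or adds a new
segment `[i,i]` if there is no uncanceled ")". -/
def fM (i : ℕ) (M : MS) : MS :=
  match lastCl (Si M i) with
  | some s => M.erase s + {(s.1, i)}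
  | none => M + {(i, i)}

/-- The crystal operator `e_i` on multisegments: it changes the segment `[h,i]`
under the leftmost uncanceled "(" of `S_i(M)` into `[h,i-1]` (deleting it when
`h = i`), or returns `none` (i.e. `0`) if there is no uncanceled "(". -/
def eM (i : ℕ) (M : MS) : Option MS :=
  match headOp (Si M i) with
  | some s => some (if s.1 = i then M.erase s else M.erase s + {(s.1, i - 1)})
  | none => none

/-- The operator `f_i^*`: it changes the segment `[i+1,j]` under the rightmost
uncanceled ")" of `S_i^*(M)` into `[i,j]`, or adds `[i,i]` if there is none. -/
def fMStar (n i : ℕ) (M : MS) : MS :=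
  match lastCl (SiStar n M i) with
  | some s => M.erase s + {(i, s.2)}
  | none => M + {(i, i)}

/-- The operator `e_i^*`: it changes the segment `[i,j]` under the leftmost
uncanceled "(" of `S_i^*(M)` into `[i+1,j]` (deleting it when `j = i`), or
returns `none` if there is no uncanceled "(". -/
def eMStar (n i : ℕ) (M : MS) : Option MS :=
  match headOp (SiStar n M i) with
  | some s => some (if s.2 = i then M.erase s else M.erase s + {(i + 1, s.2)})
  | none => none

/-- The number of boxes labeled `j` in `M`: each segment `[a,b]` contains one
box labeled `j` for each `a ≤ j ≤ b`. -/
def boxes (M : MS) (j : ℕ) : ℕ :=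
  (M.filter (fun s => s.1 ≤ j ∧ j ≤ s.2)).card

/-- The pairing `⟨wt(M), α_i^∨⟩ = #(boxes i-1) + #(boxes i+1) - 2 #(boxes i)`. -/
def wtPair (M : MS) (i : ℕ) : ℤ :=
  (boxes M (i - 1) : ℤ) + (boxes M (i + 1) : ℤ) - 2 * (boxes M i : ℤ)

/-! Read left to right, a `)` stays uncanceled exactly when no `(` is pending at that moment,
and uncanceled `)` are never touched again. So if the rightmost uncanceled `)` of `S_i(M)` lies
over `[h, i-1]`, no `(` is pending just before it and the rest of the string leaves no `)`
uncanceled. In `S_i(M)` the last `)` over a copy of `[h, i-1]` (end of the height `i-h` block) is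
immediately followed by the `(` over the copies of `[h, i]` (start of the height `i-h+1` block),
so `f_i` turns exactly that `)` into a `(`, which then stays uncanceled. If there is no
uncanceled `)`, `f_i` puts a `(` in front of `S_i(M)`, and it stays uncanceled too. -/

section BracketScan

variable {τ : Type}

@[simp]
theorem step_op (c o : List τ) (y : τ) : step (c, o) (Br.op, y) = (c, o ++ [y]) := rfl

@[simp]
theorem step_cl_nil (c : List τ) (x : τ) : step (c, []) (Br.cl, x) = (c ++ [x], []) := rfl

@[simp]
theorem step_cl_concat (c o : List τ) (y x : τ) : step (c, o ++ [y]) (Br.cl, x) = (c, o) := by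
  simp [step]

theorem foldl_step_eq_append_fst (l : List (Br × τ)) (c o : List τ) :
    l.foldl step (c, o) = (c ++ (l.foldl step ([], o)).1, (l.foldl step ([], o)).2) := by
  induction l generalizing c o with
  | nil => simp
  | cons b l ih =>
    obtain ⟨_ | _, x⟩ := b
    · simp only [List.foldl_cons, step_op]
      rw [ih]
    · rcases List.eq_nil_or_concat' o with rfl | ⟨o, y, rfl⟩
      · simp only [List.foldl_cons, step_cl_nil, List.nil_append]
        rw [ih (c ++ [x]), ih [x]]
        simp
      · simp only [List.foldl_cons, step_cl_concat]
        rw [ih]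

theorem mem_foldl_step_fst {l : List (Br × τ)} {o : List τ} {x : τ}
    (hx : x ∈ (l.foldl step ([], o)).1) : (Br.cl, x) ∈ l := by
  induction l generalizing o with
  | nil => simp at hx
  | cons b l ih =>
    obtain ⟨_ | _, y⟩ := b
    · exact List.mem_cons_of_mem _ (ih hx)
    · rcases List.eq_nil_or_concat' o with rfl | ⟨o, z, rfl⟩
      · rw [List.foldl_cons, step_cl_nil, foldl_step_eq_append_fst, List.nil_append] at hx
        rcases List.mem_append.1 hx with hy | hx
        · rw [List.mem_singleton.1 hy]
          exact List.mem_cons_self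
        · exact List.mem_cons_of_mem _ (ih hx)
      · rw [List.foldl_cons, step_cl_concat] at hx
        exact List.mem_cons_of_mem _ (ih hx)

theorem foldl_step_prepend_of_fst_eq_nil {l : List (Br × τ)} (a o : List τ)
    (h : (l.foldl step ([], o)).1 = []) :
    l.foldl step ([], a ++ o) = ([], a ++ (l.foldl step ([], o)).2) := by
  induction l generalizing o with
  | nil => simp
  | cons b l ih =>
    obtain ⟨_ | _, x⟩ := b
    · simp only [List.foldl_cons, step_op] at h ⊢
      rw [List.append_assoc]
      exact ih _ h
    · rcases List.eq_nil_or_concat' o with rfl | ⟨o, y, rfl⟩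
      · simp [foldl_step_eq_append_fst _ [x]] at h
      · simp only [List.foldl_cons, step_cl_concat] at h ⊢
        rw [← List.append_assoc, step_cl_concat]
        exact ih _ h

theorem foldl_step_replicate_cl (x : τ) (m : ℕ) (c o : List τ) :
    (List.replicate m (Br.cl, x)).foldl step (c, o) =
      (c ++ List.replicate (m - o.length) x, o.take (o.length - m)) := by
  induction m generalizing c o with
  | zero => simp
  | succ m ih =>
    rw [List.replicate_succ, List.foldl_cons]
    rcases List.eq_nil_or_concat' o with rfl | ⟨o, y, rfl⟩
    · simp [ih, List.replicate_succ]
    · rw [step_cl_concat, ih, List.length_append, List.length_singleton,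
        Nat.add_sub_add_right]
      rcases le_or_gt o.length m with hm | hm
      · simp [Nat.sub_eq_zero_of_le hm]
      · rw [List.take_append_of_le_length (by omega)]
        simp [show m - o.length = 0 by omega]

theorem scan_append (P Q : List (Br × τ)) :
    scan (P ++ Q) = ((scan P).1 ++ (Q.foldl step ([], (scan P).2)).1,
      (Q.foldl step ([], (scan P).2)).2) := by
  rw [scan, List.foldl_append, ← scan, foldl_step_eq_append_fst]

theorem scan_append_op_cons {P Q : List (Br × τ)} (y : τ) (hP : (scan P).2 = [])
    (hQ : (scan Q).1 = []) : scan (P ++ (Br.op, y) :: Q) = ((scan P).1, y :: (scan Q).2) := by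
  rw [scan_append, hP, List.foldl_cons, step_op, List.nil_append,
    ← List.append_nil [y], foldl_step_prepend_of_fst_eq_nil [y] [] hQ]
  simp [scan]

theorem scan_append_cl_cons {P Q : List (Br × τ)} (x : τ) (hP : (scan P).2 = []) :
    scan (P ++ (Br.cl, x) :: Q) = ((scan P).1 ++ x :: (scan Q).1, (scan Q).2) := by
  rw [scan_append, hP, List.foldl_cons, step_cl_nil, foldl_step_eq_append_fst]
  simp [scan]

theorem scan_eq_nil_of_lastCl {P Q : List (Br × τ)} {x : τ} {c : ℕ}
    (hP : (Br.cl, x) ∉ P) (hQ : (Br.cl, x) ∉ Q)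
    (hlast : lastCl (P ++ List.replicate (c + 1) (Br.cl, x) ++ Q) = some x) :
    (scan (P ++ List.replicate c (Br.cl, x))).2 = [] ∧ (scan Q).1 = [] := by
  obtain ⟨p, o, hPo⟩ : ∃ p o, scan P = (p, o) := ⟨_, _, rfl⟩
  have hrep (m : ℕ) : scan (P ++ List.replicate m (Br.cl, x)) =
      (p ++ List.replicate (m - o.length) x, o.take (o.length - m)) := by
    rw [scan, List.foldl_append, ← scan, hPo, foldl_step_replicate_cl]
  set R := Q.foldl step ([], o.take (o.length - (c + 1)))
  rw [lastCl, scan_append, hrep] at hlast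
  have hR : R.1 = [] := by
    by_contra hne
    obtain ⟨z, hz⟩ := Option.isSome_iff_exists.1 (List.getLast?_isSome.2 hne)
    rw [List.getLast?_append, hz] at hlast
    cases hlast
    exact hQ (mem_foldl_step_fst (List.mem_of_getLast? hz))
  have ho : o.length ≤ c := by
    by_contra! hlt
    rw [hR, List.append_nil, show c + 1 - o.length = 0 by omega, List.replicate_zero,
      List.append_nil] at hlast
    have hx : x ∈ (scan P).1 := by
      rw [hPo]
      exact List.mem_of_getLast? hlast
    exact hP (mem_foldl_step_fst hx)
  refine ⟨?_, ?_⟩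
  · simp [hrep, show o.length - c = 0 by omega]
  · simpa [R, scan, show o.length - (c + 1) = 0 by omega] using hR

theorem scan_replace_lastCl_with_op {P Q : List (Br × τ)} {x : τ} {c : ℕ}
    (hP : (Br.cl, x) ∉ P) (hQ : (Br.cl, x) ∉ Q)
    (hlast : lastCl (P ++ List.replicate (c + 1) (Br.cl, x) ++ Q) = some x) (y : τ) :
    scan (P ++ List.replicate c (Br.cl, x) ++ (Br.op, y) :: Q) =
      ((scan (P ++ List.replicate (c + 1) (Br.cl, x) ++ Q)).1.dropLast,
        y :: (scan (P ++ List.replicate (c + 1) (Br.cl, x) ++ Q)).2) := by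
  obtain ⟨hP', hQ'⟩ := scan_eq_nil_of_lastCl hP hQ hlast
  rw [List.replicate_succ', ← List.append_assoc, List.append_assoc _ [_], List.singleton_append,
    scan_append_cl_cons x hP', scan_append_op_cons y hP' hQ', hQ']
  simp

end BracketScan

theorem List.flatMap_range_eq_append {α : Type} (f : ℕ → List α) {k n : ℕ} (hk : k < n) :
    (List.range n).flatMap f =
      (List.range k).flatMap f ++ f k ++
        ((List.range (n - (k + 1))).map (k + 1 + ·)).flatMap f := by
  obtain ⟨m, rfl⟩ : ∃ m, n = k + 1 + m := ⟨n - (k + 1), by omega⟩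
  rw [List.range_add, List.range_succ, List.flatMap_append, List.flatMap_append,
    List.flatMap_singleton, Nat.add_sub_cancel_left]

def siBlock (M : MS) (i k : ℕ) : List (Br × Seg) :=
  List.replicate (M.count (i - (k + 1) + 1, i)) (Br.op, ((i - (k + 1) + 1 : ℕ), i)) ++
  List.replicate (M.count (i - (k + 1), i - 1)) (Br.cl, ((i - (k + 1) : ℕ), i - 1))

theorem Si_eq_flatMap_siBlock (M : MS) (i : ℕ) : Si M i = (List.range i).flatMap (siBlock M i) :=
  rfl

theorem mem_siBlock_cl {M : MS} {i k : ℕ} {x : Seg} (hx : (Br.cl, x) ∈ siBlock M i k) :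
    0 < M.count x ∧ x = (i - (k + 1), i - 1) := by
  simp only [siBlock, List.mem_append, List.mem_replicate, Prod.mk.injEq] at hx
  rcases hx with ⟨_, h, _⟩ | ⟨hc, _, rfl⟩
  · cases h
  · exact ⟨Nat.pos_of_ne_zero hc, rfl⟩

theorem mem_Si_cl {M : MS} {i : ℕ} {x : Seg} (hx : (Br.cl, x) ∈ Si M i) :
    0 < M.count x ∧ ∃ k < i, x = (i - (k + 1), i - 1) := by
  rw [Si_eq_flatMap_siBlock] at hx
  obtain ⟨k, hk, hx⟩ := List.mem_flatMap.1 hx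
  obtain ⟨hc, rfl⟩ := mem_siBlock_cl hx
  exact ⟨hc, k, List.mem_range.1 hk, rfl⟩

theorem cl_notMem_flatMap_siBlock {M : MS} {i h j : ℕ} {ks : List ℕ}
    (hks : ∀ k ∈ ks, i - (k + 1) ≠ h) : (Br.cl, (h, j)) ∉ ks.flatMap (siBlock M i) := by
  intro hmem
  obtain ⟨k, hk, hx⟩ := List.mem_flatMap.1 hmem
  exact hks k hk (Prod.mk.inj (mem_siBlock_cl hx).2).1.symm

theorem flatMap_siBlock_congr {M N : MS} {i h : ℕ} {ks : List ℕ}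
    (hMN : ∀ x : Seg, x.1 ≠ h → M.count x = N.count x)
    (hks : ∀ k ∈ ks, h < i - (k + 1) ∨ i - (k + 1) + 1 < h) :
    ks.flatMap (siBlock M i) = ks.flatMap (siBlock N i) := by
  refine List.flatMap_congr fun k hk => ?_
  have hne := hks k hk
  rw [siBlock, siBlock, hMN (_, i) (by dsimp only; omega), hMN (_, i - 1) (by dsimp only; omega)]

theorem Si_eq_append {M : MS} {i k : ℕ} (hk : k < i) :
    Si M i = (List.range k).flatMap (siBlock M i) ++ siBlock M i k ++
      ((List.range (i - (k + 1))).map (k + 1 + ·)).flatMap (siBlock M i) := by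
  rw [Si_eq_flatMap_siBlock]
  exact List.flatMap_range_eq_append _ hk

theorem Si_add_singleton_self {M : MS} {i : ℕ} (hi : 1 ≤ i) :
    Si (M + {(i, i)}) i = (Br.op, (i, i)) :: Si M i := by
  have hcount : ∀ x : Seg, x.1 ≠ i → (M + {(i, i)}).count x = M.count x := by
    intro x hx
    rw [Multiset.count_add, Multiset.count_singleton, if_neg (by rintro rfl; exact hx rfl),
      add_zero]
  have hblock : siBlock (M + {(i, i)}) i 0 = (Br.op, (i, i)) :: siBlock M i 0 := by
    rw [siBlock, siBlock, Nat.sub_add_cancel hi, Multiset.count_add, Multiset.count_singleton_self,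
      hcount _ (by dsimp only; omega), List.replicate_succ, List.cons_append]
  have hrest := flatMap_siBlock_congr hcount (i := i)
    (ks := (List.range (i - (0 + 1))).map (0 + 1 + ·)) (by
      simp only [List.mem_map, List.mem_range]
      rintro _ ⟨j, hj, rfl⟩
      omega)
  rw [Si_eq_append hi, Si_eq_append hi, hblock, hrest]
  simp

theorem exists_Si_split_erase_add_singleton {M : MS} {i h c : ℕ} (h1 : 1 ≤ h) (hi : h < i)
    (hc : M.count (h, i - 1) = c + 1) :
    ∃ X Y : List (Br × Seg), (Br.cl, (h, i - 1)) ∉ X ∧ (Br.cl, (h, i - 1)) ∉ Y ∧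
      Si M i = X ++ List.replicate (c + 1) (Br.cl, (h, i - 1)) ++ Y ∧
      Si (M.erase (h, i - 1) + {(h, i)}) i =
        X ++ List.replicate c (Br.cl, (h, i - 1)) ++ (Br.op, (h, i)) :: Y := by
  set M' := M.erase (h, i - 1) + {(h, i)}
  -- `[h, i-1]` lies in the block of index `t`, `[h, i]` in the next one
  obtain ⟨t, e1, e2, ht⟩ : ∃ t, i - (t + 1) = h ∧ i - (t + 1 + 1) + 1 = h ∧ t + 1 < i :=
    ⟨i - (h + 1), by omega, by omega, by omega⟩
  have hcount : ∀ x : Seg, x.1 ≠ h → M'.count x = M.count x := by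
    intro x hx
    rw [Multiset.count_add, Multiset.count_erase_of_ne (by rintro rfl; exact hx rfl),
      Multiset.count_singleton, if_neg (by rintro rfl; exact hx rfl), add_zero]
  have hblock : siBlock M i t = List.replicate (M.count (h + 1, i)) (Br.op, (h + 1, i)) ++
      List.replicate (c + 1) (Br.cl, (h, i - 1)) := by
    rw [siBlock, e1, hc]
  have hblock' : siBlock M' i t = List.replicate (M.count (h + 1, i)) (Br.op, (h + 1, i)) ++
      List.replicate c (Br.cl, (h, i - 1)) := by
    rw [siBlock, e1, hcount _ (by dsimp only; omega), Multiset.count_add,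
      Multiset.count_erase_self, hc, Multiset.count_singleton, if_neg (by simp; omega)]
    rfl
  have hnext : siBlock M' i (t + 1) = (Br.op, (h, i)) :: siBlock M i (t + 1) := by
    rw [siBlock, siBlock, e2, Multiset.count_add, Multiset.count_erase_of_ne (by simp; omega),
      Multiset.count_singleton_self, hcount _ (by dsimp only; omega), List.replicate_succ,
      List.cons_append]
  set rest := (List.range (i - (t + 1 + 1))).map (t + 1 + 1 + ·)
  have hrest_mem : ∀ k ∈ rest, t + 1 < k ∧ k < i := by
    simp only [rest, List.mem_map, List.mem_range]
    rintro _ ⟨j, hj, rfl⟩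
    omega
  have hprefix := flatMap_siBlock_congr hcount (ks := List.range t) (i := i) (by
    intro k hk
    have := List.mem_range.1 hk
    omega)
  have hsuffix := flatMap_siBlock_congr hcount (ks := rest) (i := i) (by
    intro k hk
    have := hrest_mem k hk
    omega)
  refine ⟨(List.range t).flatMap (siBlock M i) ++
      List.replicate (M.count (h + 1, i)) (Br.op, (h + 1, i)),
    ((t + 1) :: rest).flatMap (siBlock M i), ?_, ?_, ?_, ?_⟩
  · rw [List.mem_append, not_or]
    refine ⟨cl_notMem_flatMap_siBlock fun k hk => ?_, by simp [List.mem_replicate]⟩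
    have := List.mem_range.1 hk
    omega
  · refine cl_notMem_flatMap_siBlock fun k hk => ?_
    rcases List.mem_cons.1 hk with rfl | hk
    · omega
    · have := hrest_mem k hk
      omega
  · rw [Si_eq_append ht, List.range_succ, List.flatMap_append, List.flatMap_singleton, hblock,
      List.flatMap_cons]
    simp only [List.append_assoc]
    rfl
  · rw [Si_eq_append ht, List.range_succ, List.flatMap_append, List.flatMap_singleton, hblock',
      hnext, hprefix, hsuffix, List.flatMap_cons]
    simp only [List.append_assoc, List.cons_append]

theorem scan_Si_fM {M : MS} {i : ℕ} (hi : 1 ≤ i) (hM : ∀ s ∈ M, 1 ≤ s.1) :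
    ∃ y, scan (Si (fM i M) i) = ((scan (Si M i)).1.dropLast, y :: (scan (Si M i)).2) := by
  cases hlast : lastCl (Si M i) with
  | none =>
    have hfM : fM i M = M + {(i, i)} := by rw [fM, hlast]
    have hcl : (scan (Si M i)).1 = [] := List.getLast?_eq_none_iff.1 hlast
    refine ⟨(i, i), ?_⟩
    rw [hfM, Si_add_singleton_self hi, ← List.nil_append ((Br.op, (i, i)) :: Si M i),
      scan_append_op_cons _ rfl hcl, hcl]
    rfl
  | some s =>
    have hfM : fM i M = M.erase s + {(s.1, i)} := by rw [fM, hlast]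
    obtain ⟨hpos, k, hk, rfl⟩ := mem_Si_cl (mem_foldl_step_fst (List.mem_of_getLast? hlast))
    obtain ⟨c, hc⟩ := Nat.exists_eq_add_of_lt hpos
    obtain ⟨X, Y, hX, hY, hSi, hSi'⟩ :=
      exists_Si_split_erase_add_singleton (hM _ (Multiset.count_pos.1 hpos)) (by omega) hc
    refine ⟨(i - (k + 1), i), ?_⟩
    rw [hSi] at hlast ⊢
    rw [hfM, hSi', scan_replace_lastCl_with_op hX hY hlast]

theorem stmt19_general (n i : ℕ) (hi : 1 ≤ i) (M : MS) (hM : IsMS n M) :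
    epsStr (Si (fM i M) i) = epsStr (Si M i) + 1 ∧
    (0 < urStr (Si M i) → urStr (Si (fM i M) i) = urStr (Si M i) - 1) ∧
    (urStr (Si M i) = 0 → urStr (Si (fM i M) i) = 0) := by
  obtain ⟨y, hscan⟩ := scan_Si_fM hi fun s hs => (hM s hs).1
  have hur : urStr (Si (fM i M) i) = urStr (Si M i) - 1 := by
    simp [urStr, hscan]
  exact ⟨by simp [epsStr, hscan], fun _ => hur, fun h0 => by rw [hur, h0]⟩

theorem stmt19 (n i : ℕ) (hi : 1 ≤ i) (hin : i ≤ n) (M : MS) (hM : IsMS n M) :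
    epsStr (Si (fM i M) i) = epsStr (Si M i) + 1 ∧
    (0 < urStr (Si M i) → urStr (Si (fM i M) i) = urStr (Si M i) - 1) ∧
    (urStr (Si M i) = 0 → urStr (Si (fM i M) i) = 0) :=
  stmt19_general n i hi M hM
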